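/- arXiv:2102.00285 — 4 statements merged into one kernel-verified Lean document; each statement's English description precedes it below -/
import Mathlib

section
/- Let A = ⟨a⟩ be free of rank 1, B = ⟨b,c,d⟩ free of rank 3, and let G = A ∗_U B be the amalgamated product identifying p = a² ∈ A with q = (bc)²d² ∈ B. Then in G/⟨⟨a(bc)⁻¹⟩⟩ the image of d² is trivial; in particular the free subgroup ⟨c,d⟩ of B does not embed into G/⟨⟨a(bc)⁻¹⟩⟩. -/
/-- `G` together with `iA`, `iB` is the amalgamated product `A ∗_{⟨p⟩=⟨q⟩} B`. -/
def IsAmalgam {A B G : Type} [Group A] [Group B] [Group G]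
    (iA : A →* G) (iB : B →* G) (p : A) (q : B) : Prop :=
  Function.Injective iA ∧ Function.Injective iB ∧ iA p = iB q ∧
  ∀ (K : Type) [Group K] (fA : A →* K) (fB : B →* K), fA p = fB q →
    ∃! f : G →* K, f.comp iA = fA ∧ f.comp iB = fB

/-!
Killing `r = a(bc)⁻¹` identifies `a` with `bc`, so the amalgamating relation `a² = (bc)²d²`
becomes `(bc)² = (bc)²d²`, i.e. `d² = 1`. Since `c ↦ c, d ↦ d` sends the nontrivial element
`d²` of the free group `⟨c, d⟩` to `1`, that subgroup cannot embed.
-/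

open QuotientGroup Subgroup

lemma QuotientGroup.mk'_normalClosure_mul_inv {G : Type*} [Group G] (x y : G) :
    mk' (normalClosure {x * y⁻¹}) x = mk' (normalClosure {x * y⁻¹}) y := by
  have h : mk' (normalClosure {x * y⁻¹}) (x * y⁻¹) = 1 :=
    (eq_one_iff _).mpr (subset_normalClosure rfl)
  rwa [map_mul, map_inv, mul_inv_eq_one] at h

lemma MonoidHom.map_eq_one_of_pow_eq_pow_mul {G H : Type*} [Group G] [Group H] (π : G →* H)
    {x y z : G} {n : ℕ} (hxy : π x = π y) (h : x ^ n = y ^ n * z) : π z = 1 := by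
  have h' := congrArg π h
  rw [map_pow, map_mul, map_pow, hxy] at h'
  exact left_eq_mul.mp h'

lemma FreeGroup.of_pow_ne_one {α : Type*} (a : α) {n : ℕ} (hn : n ≠ 0) :
    FreeGroup.of a ^ n ≠ 1 :=
  fun h => FreeGroup.of_ne_one a ((pow_eq_one_iff_left hn).mp h)

lemma MonoidHom.not_injective_of_map_eq_one {G H : Type*} [Group G] [Group H] (f : G →* H)
    {x : G} (hx : x ≠ 1) (hfx : f x = 1) : ¬ Function.Injective f :=
  fun hf => hx ((injective_iff_map_eq_one f).mp hf x hfx)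

/-- The example showing maximality of the amalgamated cyclic subgroup cannot be omitted:
with `A = ⟨a⟩`, `B = ⟨b,c,d⟩`, `p = a²`, `q = (bc)²d²` and `r = a(bc)⁻¹`, the image of
`d²` is trivial in `G/⟨⟨r⟩⟩`, and `⟨c,d⟩ ≤ B` does not embed. -/
theorem example_no_freiheitssatz_nonmaximal {G : Type} [Group G]
    (iA : FreeGroup Unit →* G) (iB : FreeGroup (Fin 3) →* G)
    (hG : IsAmalgam iA iB ((FreeGroup.of ()) ^ 2)
      ((FreeGroup.of 0 * FreeGroup.of 1) ^ 2 * (FreeGroup.of 2) ^ 2)) :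
    (QuotientGroup.mk' (Subgroup.normalClosure
        {iA (FreeGroup.of ()) * (iB (FreeGroup.of 0 * FreeGroup.of 1))⁻¹}))
      (iB ((FreeGroup.of 2) ^ 2)) = 1 ∧
    ¬ Function.Injective
      ((QuotientGroup.mk' (Subgroup.normalClosure
          {iA (FreeGroup.of ()) * (iB (FreeGroup.of 0 * FreeGroup.of 1))⁻¹})).comp
        (iB.comp (FreeGroup.lift
          (fun i : Fin 2 => if i = 0 then (FreeGroup.of 1 : FreeGroup (Fin 3))
            else FreeGroup.of 2)))) := by
  obtain ⟨-, -, hpq, -⟩ := hG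
  have hd : mk' (normalClosure {iA (FreeGroup.of ()) * (iB (FreeGroup.of 0 * FreeGroup.of 1))⁻¹})
      (iB (FreeGroup.of 2 ^ 2)) = 1 := by
    refine MonoidHom.map_eq_one_of_pow_eq_pow_mul _ (mk'_normalClosure_mul_inv _ _) (n := 2) ?_
    rw [← map_pow, ← map_pow, ← map_mul]
    exact hpq
  refine ⟨hd, MonoidHom.not_injective_of_map_eq_one _
    (FreeGroup.of_pow_ne_one (1 : Fin 2) two_ne_zero) ?_⟩
  simpa using hd
end

section
/- In a free group, a non-trivial product of two commutators is never a fourth power: if F is free and x = [a,b][c,d] ≠ 1 with a,b,c,d ∈ F, then x is not of the form z⁴ for any z ∈ F. -/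
/-!
Work in the group `CircleDeg1Liftˣ` of lifts to `ℝ` of orientation-preserving circle
homeomorphisms. Since `AB = A (BA) A⁻¹` has the same translation number as `BA`, a commutator
`[A, B] = (BA)⁻¹ AB` cannot move every point by more than `1`; hence it has translation number
at most `1` and moves every point by less than `2`, and a product of two commutators moves every
point by less than `4`.

Conversely, every `z ≠ 1` in a free group acts, under a suitable homomorphism to `CircleDeg1Liftˣ`,
by moving some point by exactly `1`, so that `z ^ 4` moves it by exactly `4`. Up to conjugation
`z = l₀ ⋯ lₙ₋₁` is cyclically reduced; the letter `lₜ` is made to carry `-(t + 1) / n` to `-t / n`,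
each generator acting piecewise linearly between the nodes `K / n`, `K ∈ ℤ`. These prescriptions are
consistent and order preserving precisely because no two cyclically adjacent letters cancel.
-/

open Function

namespace CircleDeg1Lift

theorem translationNumber_add_one_le {f g : CircleDeg1Lift} (h : ∀ x, g x + 1 ≤ f x) :
    translationNumber g + 1 ≤ translationNumber f := by
  set T : CircleDeg1Lift := ↑(translate (Multiplicative.ofAdd 1))
  have hT : Commute T g := commute_iff_commute.2 fun x => by
    simp [T, translate_apply, map_one_add]
  calc translationNumber g + 1 = translationNumber (T * g) := by
        rw [translationNumber_mul_of_commute hT, translationNumber_translate, add_comm]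
    _ ≤ translationNumber f :=
        translationNumber_mono fun x => by simpa [T, mul_apply, translate_apply, add_comm] using h x

theorem exists_commutator_apply_le (A B : CircleDeg1Liftˣ) :
    ∃ x, (A⁻¹ * B⁻¹ * A * B) x ≤ x + 1 := by
  by_contra! hlt
  have hBA : ((B * A : CircleDeg1Liftˣ) : CircleDeg1Lift) * ↑(A⁻¹ * B⁻¹ * A * B) = ↑(A * B) := by
    rw [← Units.val_mul]; congr 1; group
  have hdom : ∀ x, (B * A) x + 1 ≤ (A * B) x := fun x => by
    have h := (↑(B * A) : CircleDeg1Lift).monotone (hlt x).le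
    rwa [← mul_apply, hBA, map_add_one] at h
  have hconj : translationNumber ↑(A * B) = translationNumber ↑(B * A) := by
    rw [show A * B = A * (B * A) * A⁻¹ by group, Units.val_mul, Units.val_mul,
      translationNumber_conj_eq]
  have := translationNumber_add_one_le hdom
  linarith

theorem commutator_apply_lt_add_two (A B : CircleDeg1Liftˣ) (x : ℝ) :
    (A⁻¹ * B⁻¹ * A * B) x < x + 2 := by
  obtain ⟨y, hy⟩ := exists_commutator_apply_le A B
  have hτ := translationNumber_le_of_le_add_int (m := 1) _ (x := y) (by exact_mod_cast hy)
  have := map_lt_add_translationNumber_add_one (↑(A⁻¹ * B⁻¹ * A * B)) x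
  rw [Int.cast_one] at hτ
  linarith

theorem commutator_mul_commutator_apply_lt_add_four (A B C D : CircleDeg1Liftˣ) (x : ℝ) :
    (A⁻¹ * B⁻¹ * A * B * (C⁻¹ * D⁻¹ * C * D)) x < x + 4 := by
  have h₁ := commutator_apply_lt_add_two A B ((C⁻¹ * D⁻¹ * C * D) x)
  have h₂ := commutator_apply_lt_add_two C D x
  rw [Units.val_mul, mul_apply]
  linarith

end CircleDeg1Lift

noncomputable def linearInterp (φ : ℤ → ℝ) (y : ℝ) : ℝ :=
  φ ⌊y⌋ + Int.fract y * (φ (⌊y⌋ + 1) - φ ⌊y⌋)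

section LinearInterp

variable {φ : ℤ → ℝ}

@[simp]
theorem linearInterp_intCast (k : ℤ) : linearInterp φ k = φ k := by
  simp [linearInterp]

theorem linearInterp_add_intCast {N : ℤ} {c : ℝ} (h : ∀ k, φ (k + N) = φ k + c) (y : ℝ) :
    linearInterp φ (y + N) = linearInterp φ y + c := by
  simp only [linearInterp, Int.floor_add_intCast, Int.fract_add_intCast, add_right_comm _ N 1, h]
  ring

theorem linearInterp_mem_Ico (hφ : StrictMono φ) (y : ℝ) :
    linearInterp φ y ∈ Set.Ico (φ ⌊y⌋) (φ (⌊y⌋ + 1)) := by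
  have hgap : 0 < φ (⌊y⌋ + 1) - φ ⌊y⌋ := sub_pos.2 (hφ (lt_add_one _))
  constructor <;> simp only [linearInterp]
  · nlinarith [Int.fract_nonneg y]
  · nlinarith [Int.fract_lt_one y]

theorem strictMono_linearInterp (hφ : StrictMono φ) : StrictMono (linearInterp φ) := by
  intro y y' hyy'
  rcases (Int.floor_mono hyy'.le).eq_or_lt with hfl | hfl
  · have hgap : 0 < φ (⌊y⌋ + 1) - φ ⌊y⌋ := sub_pos.2 (hφ (lt_add_one _))
    have hfr : Int.fract y < Int.fract y' := by
      rw [Int.fract, Int.fract, ← hfl]; linarith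
    simp only [linearInterp, ← hfl]
    nlinarith
  · calc linearInterp φ y < φ (⌊y⌋ + 1) := (linearInterp_mem_Ico hφ y).2
      _ ≤ φ ⌊y'⌋ := hφ.monotone (Int.add_one_le_of_lt hfl)
      _ ≤ linearInterp φ y' := (linearInterp_mem_Ico hφ y').1

theorem surjective_linearInterp (hφ : StrictMono φ) (hbot : ∀ v, ∃ k, φ k ≤ v)
    (htop : ∀ v, ∃ k, v < φ k) : Surjective (linearInterp φ) := by
  intro v
  obtain ⟨k, hkv, hk⟩ : ∃ k, φ k ≤ v ∧ ∀ j, φ j ≤ v → j ≤ k := by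
    obtain ⟨b, hb⟩ := htop v
    exact Int.exists_greatest_of_bdd ⟨b, fun j hj => (hφ.lt_iff_lt.1 (hj.trans_lt hb)).le⟩ (hbot v)
  have hvk : v < φ (k + 1) := lt_of_not_ge fun h => by simpa using hk _ h
  have hgap : 0 < φ (k + 1) - φ k := sub_pos.2 (hφ (lt_add_one _))
  set r := (v - φ k) / (φ (k + 1) - φ k)
  have hr : r ∈ Set.Ico (0 : ℝ) 1 :=
    ⟨div_nonneg (sub_nonneg.2 hkv) hgap.le, (div_lt_one hgap).2 (by linarith)⟩
  have hfloor : ⌊(k : ℝ) + r⌋ = k := by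
    rw [Int.floor_eq_iff]; constructor <;> linarith [hr.1, hr.2]
  refine ⟨k + r, ?_⟩
  rw [linearInterp, hfloor, Int.fract, hfloor, add_sub_cancel_left]
  simp only [r]
  field_simp
  ring

end LinearInterp

namespace CircleDeg1Lift

theorem exists_units_apply_div_eq {N : ℕ} (hN : 0 < N) {φ : ℤ → ℝ}
    (hφ : StrictMono φ) (hper : ∀ k, φ (k + N) = φ k + 1) :
    ∃ f : CircleDeg1Liftˣ, ∀ k : ℤ, f (k / N) = φ k := by
  have hN' : (N : ℝ) ≠ 0 := by positivity
  let g : CircleDeg1Lift :=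
    { toFun := fun x => linearInterp φ (N * x)
      monotone' := (strictMono_linearInterp hφ).monotone.comp
        (monotone_id.const_mul (Nat.cast_nonneg N))
      map_add_one' := fun x => by
        simpa [mul_add] using linearInterp_add_intCast (N := N) hper (N * x) }
  have hg : ∀ k : ℤ, g (k / N) = φ k := fun k => by
    simp [g, mul_div_cancel₀ _ hN']
  have hφN : ∀ m : ℤ, φ (N * m) = φ 0 + m := fun m => by
    calc φ (N * m) = g m := by rw [← hg]; congr 1; push_cast; field_simp
      _ = g 0 + m := g.map_int_of_map_zero m
      _ = φ 0 + m := by rw [← hg 0]; simp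
  have hsurj : Surjective g :=
    (surjective_linearInterp hφ
      (fun v => ⟨N * ⌊v - φ 0⌋, by rw [hφN]; linarith [Int.floor_le (v - φ 0)]⟩)
      (fun v => ⟨N * ⌈v - φ 0 + 1⌉, by rw [hφN]; linarith [Int.le_ceil (v - φ 0 + 1)]⟩)).comp
      (fun y => ⟨y / N, mul_div_cancel₀ _ hN'⟩)
  exact ⟨(isUnit_iff_bijective.2
    ⟨((strictMono_linearInterp hφ).comp (strictMono_mul_left_of_pos (by positivity))).injective,
      hsurj⟩).unit, hg⟩

theorem list_prod_apply_eq {l : List CircleDeg1Liftˣ} {y : ℕ → ℝ}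
    (h : ∀ t (ht : t < l.length), l[t] (y (t + 1)) = y t) : l.prod (y l.length) = y 0 := by
  induction l generalizing y with
  | nil => simp
  | cons g l ih =>
    rw [List.prod_cons, Units.val_mul, mul_apply, List.length_cons,
      ih (y := fun t => y (t + 1)) fun t ht => h (t + 1) (by simpa using ht)]
    exact h 0 (by simp)

end CircleDeg1Lift

namespace FreeGroup
variable {α : Type*}

open Classical in
/-- The generator `s` will move the node `K / n`, which lies between the letters `u` and `v` at
positions `-K - 1` and `-K` of the periodic word, by `nodeShift s u v / n`. The values `±1` are
forced by those letters; the values `±1 / 3` keep the neighbouring nodes in order. -/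
noncomputable def nodeShift (s : α) (u v : α × Bool) : ℝ :=
  if u = (s, true) then 1 else if v = (s, false) then -1
  else if v = (s, true) then 1 / 3 else if u = (s, false) then -1 / 3 else 0

theorem nodeShift_lt_one_add (s : α) (a : α × Bool) {b c : α × Bool}
    (hbc : b.1 = c.1 → b.2 = c.2) : nodeShift s b c < 1 + nodeShift s a b := by
  unfold nodeShift
  split_ifs <;> subst_vars <;> simp_all <;> norm_num

section NodeValue

variable {n : ℕ} {w : ℤ → α × Bool}

variable (n w) in
noncomputable def nodeValue (s : α) (K : ℤ) : ℝ :=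
  (K + nodeShift s (w (-K - 1)) (w (-K))) / n

theorem strictMono_nodeValue (hn : 0 < n)
    (hred : ∀ t, (w t).1 = (w (t + 1)).1 → (w t).2 = (w (t + 1)).2) (s : α) :
    StrictMono (nodeValue n w s) := strictMono_int_of_lt_succ fun K => by
  have := nodeShift_lt_one_add s (w (-K - 1 - 1)) (hred (-K - 1))
  rw [nodeValue, nodeValue, div_lt_div_iff_of_pos_right (by exact_mod_cast hn)]
  simp only [show -K - 1 + 1 = -K by ring, show -(K + 1) = -K - 1 by ring, Int.cast_add,
    Int.cast_one] at this ⊢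
  linarith

theorem nodeValue_add_natCast (hn : 0 < n) (hper : ∀ t, w (t + n) = w t) (s : α) (K : ℤ) :
    nodeValue n w s (K + n) = nodeValue n w s K + 1 := by
  have h₁ := hper (-(K + n) - 1)
  have h₂ := hper (-(K + n))
  simp only [show -(K + n) - 1 + n = -K - 1 by ring, show -(K + n) + n = -K by ring] at h₁ h₂
  rw [nodeValue, nodeValue, h₁, h₂]
  field_simp
  push_cast
  ring

theorem exists_units_letter_apply (hn : 0 < n) (hper : ∀ t, w (t + n) = w t)
    (hred : ∀ t, (w t).1 = (w (t + 1)).1 → (w t).2 = (w (t + 1)).2) :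
    ∃ f : α → CircleDeg1Liftˣ, ∀ t : ℤ,
      (cond (w t).2 (f (w t).1) (f (w t).1)⁻¹) ((-t - 1) / n) = -t / n := by
  choose f hf using fun s => CircleDeg1Lift.exists_units_apply_div_eq hn
    (strictMono_nodeValue hn hred s) (nodeValue_add_natCast hn hper s)
  refine ⟨f, fun t => ?_⟩
  rcases hwt : w t with ⟨s, _ | _⟩
  · have hprev : w (t - 1) ≠ (s, true) := fun h => by
      simpa [h, hwt] using hred (t - 1)
    have hnode : f s (-t / n) = (-t - 1) / n := by
      have := hf s (-t)
      rw [nodeValue, show -(-t) - 1 = t - 1 by ring, neg_neg, hwt] at this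
      rw [← Int.cast_neg, this, nodeShift, if_neg hprev, if_pos rfl]
      push_cast
      ring
    rw [cond_false, ← hnode, CircleDeg1Lift.units_inv_apply_apply]
  · simpa [nodeValue, nodeShift, hwt] using hf s (-t - 1)

end NodeValue

theorem IsCyclicallyReduced.exists_periodic_extension {M : List (α × Bool)}
    (hM : IsCyclicallyReduced M) (hne : M ≠ []) :
    ∃ w : ℤ → α × Bool, (∀ t, w (t + M.length) = w t) ∧
      (∀ t, (w t).1 = (w (t + 1)).1 → (w t).2 = (w (t + 1)).2) ∧
      ∀ (i : ℕ) (hi : i < M.length), w i = M[i] := by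
  have hn : (0 : ℤ) < M.length := by exact_mod_cast List.length_pos_iff.2 hne
  have hlt (t : ℤ) : (t % M.length).toNat < M.length := by
    have := Int.emod_lt_of_pos t hn; have := Int.emod_nonneg t hn.ne'; omega
  refine ⟨fun t => M[(t % M.length).toNat]'(hlt t), fun t => by simp, fun t => ?_,
    fun i hi => ?_⟩
  · have hsucc : (t + 1) % M.length = (t % M.length + 1) % M.length :=
      (Int.emod_add_emod _ _ _).symm
    have h0 := Int.emod_nonneg t hn.ne'
    have h1 := Int.emod_lt_of_pos t hn
    rcases (Int.add_one_le_of_lt h1).lt_or_eq with hj | hj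
    · have hidx : ((t + 1) % M.length).toNat = (t % M.length).toNat + 1 := by
        rw [hsucc, Int.emod_eq_of_lt (by omega) hj]; omega
      simpa only [hidx] using hM.isReduced.getElem _ (by omega)
    · have hidx : ((t + 1) % M.length).toNat = 0 := by rw [hsucc, hj, Int.emod_self]; rfl
      have hlast : (t % M.length).toNat = M.length - 1 := by omega
      simp only [hidx, hlast]
      exact hM.2 _ (by simp [List.getLast?_eq_getElem?]) _ (by simp [List.head?_eq_getElem?])
  · have hidx : ((i : ℤ) % M.length).toNat = i := by
      rw [Int.emod_eq_of_lt (by omega) (by omega)]; rfl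
    simp only [hidx]

theorem exists_lift_mk_apply_neg_one {M : List (α × Bool)} (hM : IsCyclicallyReduced M)
    (hne : M ≠ []) : ∃ f : α → CircleDeg1Liftˣ, lift f (mk M) (-1) = 0 := by
  obtain ⟨w, hper, hred, hwM⟩ := hM.exists_periodic_extension hne
  have hn := List.length_pos_iff.2 hne
  obtain ⟨f, hf⟩ := exists_units_letter_apply hn hper hred
  refine ⟨f, ?_⟩
  have := CircleDeg1Lift.list_prod_apply_eq (l := M.map fun x => cond x.2 (f x.1) (f x.1)⁻¹)
    (y := fun t => -t / M.length) fun t ht => by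
      rw [List.length_map] at ht
      simpa [← hwM t ht, sub_eq_add_neg, add_comm] using hf t
  have hn' : (M.length : ℝ) ≠ 0 := by positivity
  simpa [lift_mk, neg_div, div_self hn'] using this

theorem exists_hom_apply_eq_add_one {z : FreeGroup α} (hz : z ≠ 1) :
    ∃ (ρ : FreeGroup α →* CircleDeg1Liftˣ) (x : ℝ), ρ z x = x + 1 := by
  classical
  set c := reduceCyclically z.toWord
  set u := reduceCyclically.conjugator z.toWord
  have hzc : z = mk u * mk c * (mk u)⁻¹ := by
    rw [inv_mk, mul_mk, mul_mk, reduceCyclically.conj_conjugator_reduceCyclically, mk_toWord]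
  have hc : c ≠ [] := fun h => hz (by rw [hzc, h, ← one_eq_mk]; group)
  obtain ⟨f, hf⟩ := exists_lift_mk_apply_neg_one
    (reduceCyclically.isCyclicallyReduced isReduced_toWord) hc
  refine ⟨lift f, lift f (mk u) (-1), ?_⟩
  rw [hzc, _root_.map_mul, _root_.map_mul, _root_.map_inv, Units.val_mul, Units.val_mul,
    CircleDeg1Lift.mul_apply, CircleDeg1Lift.mul_apply, CircleDeg1Lift.units_inv_apply_apply, hf,
    ← CircleDeg1Lift.map_add_one]
  norm_num

end FreeGroup

/-- In a free group, a non-trivial product of two commutators is never a fourth power. -/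
theorem no_fourth_power_product_of_two_commutators {α : Type}
    (a b c d z : FreeGroup α)
    (h : a⁻¹ * b⁻¹ * a * b * (c⁻¹ * d⁻¹ * c * d) ≠ 1) :
    a⁻¹ * b⁻¹ * a * b * (c⁻¹ * d⁻¹ * c * d) ≠ z ^ 4 := by
  intro heq
  have hz : z ≠ 1 := by
    rintro rfl
    exact h (by simpa using heq)
  obtain ⟨ρ, x, hx⟩ := FreeGroup.exists_hom_apply_eq_add_one hz
  have hlt := CircleDeg1Lift.commutator_mul_commutator_apply_lt_add_four (ρ a) (ρ b) (ρ c) (ρ d) x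
  simp only [← map_inv, ← map_mul, heq, map_pow, Units.val_pow_eq_pow_val,
    CircleDeg1Lift.coe_pow] at hlt
  have := CircleDeg1Lift.iterate_eq_of_map_eq_add_int (m := 1) _ (by exact_mod_cast hx) 4
  push_cast at this
  linarith
end

section
/- A free product of locally indicable groups is locally indicable. -/
/-! If a finitely generated subgroup `H ≤ A ∗ B` has nontrivial image in `A` (or `B`), that
image is a nontrivial finitely generated subgroup of a locally indicable group, and its
surjection onto `ℤ` pulls back to `H`. Otherwise `H` lies in the kernel of `A ∗ B → A × B`.
This kernel is generated by the commutators `⁅a, b⁆` (their span is already normal, with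
quotient `A × B`), and ping-pong on reduced words shows that the nontrivial ones form a free
basis. By Nielsen–Schreier `H` is then a nontrivial free group, and such a group surjects
onto `ℤ`. -/

open Monoid

/-- A group is locally indicable if every non-trivial finitely generated subgroup
surjects onto `ℤ`. -/
def LocallyIndicable (G : Type) [Group G] : Prop :=
  ∀ H : Subgroup G, H ≠ ⊥ → H.FG →
    ∃ f : H →* Multiplicative ℤ, Function.Surjective f

open Function Pointwise
open scoped commutatorElement

universe u

namespace FreeGroup

variable {ι G : Type u} [Group G]

theorem injective_lift_of_unique [Unique ι] {a : ι → G} (ha : ¬IsOfFinOrder (a default)) :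
    Injective (lift a) := by
  have h : ⇑(lift a) = (fun n : ℤ => a default ^ n) ∘ equivIntOfUnique := by
    funext x
    conv_lhs => rw [← equivIntOfUnique.left_inv x]
    simp [equivIntOfUnique]
  rw [h]
  exact (injective_zpow_iff_not_isOfFinOrder.2 ha).comp equivIntOfUnique.injective

theorem injective_lift_of_ping_pong_of_basepoint {α : Type*} [MulAction G α] (a : ι → G)
    (X Y : ι → Set α)
    (hXnonempty : ∀ i, (X i).Nonempty) (hXdisj : Pairwise (Disjoint on X))
    (hYdisj : Pairwise (Disjoint on Y)) (hXYdisj : ∀ i j, Disjoint (X i) (Y j))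
    (hX : ∀ i, a i • (Y i)ᶜ ⊆ X i) (hY : ∀ i, a⁻¹ i • (X i)ᶜ ⊆ Y i)
    (x : α) (hxX : ∀ i, x ∉ X i) (hxY : ∀ i, x ∉ Y i) :
    Injective (lift a) := by
  rcases isEmpty_or_nonempty ι with hι | ⟨⟨i⟩⟩
  · exact injective_of_subsingleton _
  rcases subsingleton_or_nontrivial ι with hι | hι
  -- `injective_lift_of_ping_pong` needs two generators; a single one has infinite order since
  -- its positive powers move the base point into `X default`.
  · have : Unique ι := uniqueOfSubsingleton i
    have hpow : ∀ n : ℕ, a default ^ (n + 1) • x ∈ X default := by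
      intro n
      induction n with
      | zero => simpa using hX default (Set.smul_mem_smul_set (hxY default))
      | succ n ih =>
        rw [pow_succ', mul_smul]
        exact hX _ (Set.smul_mem_smul_set ((hXYdisj _ _).subset_compl_right ih))
    refine injective_lift_of_unique fun hfin => ?_
    obtain ⟨n, hn, hpow1⟩ := isOfFinOrder_iff_pow_eq_one.1 hfin
    obtain ⟨k, rfl⟩ := Nat.exists_eq_succ_of_ne_zero hn.ne'
    exact hxX default (by simpa [hpow1] using hpow k)
  · exact injective_lift_of_ping_pong a X Y hXnonempty hXdisj hYdisj hXYdisj hX hY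

end FreeGroup

namespace Monoid.CoprodI.Word

variable {ι : Type*} {M : ι → Type*} [∀ i, Group (M i)]

def startingWith {i j : ι} (a : M i) (b : M j) : Set (Word M) :=
  {w | ∃ t, w.toList = ⟨i, a⟩ :: ⟨j, b⟩ :: t}

theorem empty_notMem_startingWith {i j : ι} (a : M i) (b : M j) :
    Word.empty ∉ startingWith a b := by
  rintro ⟨t, ht⟩
  cases ht

theorem fstIdx_of_mem_startingWith {i j : ι} {a : M i} {b : M j} {w : Word M}
    (hw : w ∈ startingWith a b) : w.fstIdx = some i := by
  obtain ⟨t, ht⟩ := hw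
  simp [fstIdx, ht]

theorem eq_of_mem_startingWith {i j : ι} {a a' : M i} {b b' : M j} {w : Word M}
    (hw : w ∈ startingWith a b) (hw' : w ∈ startingWith a' b') : a = a' ∧ b = b' := by
  obtain ⟨t, ht⟩ := hw
  obtain ⟨t', ht'⟩ := hw'
  have h := ht.symm.trans ht'
  simp only [List.cons.injEq, Sigma.mk.inj_iff, heq_eq_eq, true_and] at h
  exact ⟨h.1, h.2.1⟩

variable [DecidableEq ι] [∀ i, DecidableEq (M i)]

theorem toList_of_mul_of_smul {i j : ι} (hij : i ≠ j) {a : M i} {b : M j} (ha : a ≠ 1)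
    (hb : b ≠ 1) {w : Word M} (hw : w.fstIdx ≠ some j) :
    ((of a * of b) • w).toList = ⟨i, a⟩ :: ⟨j, b⟩ :: w.toList := by
  have hbw : (cons b w hw hb).fstIdx ≠ some i := by
    rw [fstIdx_cons]
    exact (Option.some_injective _).ne hij.symm
  rw [mul_smul, ← cons_eq_smul (h1 := hw) (h2 := hb), ← cons_eq_smul (h1 := hbw) (h2 := ha)]
  rfl

theorem commutatorElement_of_smul_mem_startingWith {i j : ι} (hij : i ≠ j) {a : M i} {b : M j}
    (ha : a ≠ 1) (hb : b ≠ 1) {w : Word M} (hw : w ∉ startingWith b a) :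
    ⁅of a, of b⁆ • w ∈ startingWith a b := by
  set v := (of b * of a)⁻¹ • w
  -- Otherwise `w = (of b * of a) • v` would start with the letters `b`, `a`.
  have hv : v.fstIdx ≠ some j := by
    intro hvj
    have hvi : v.fstIdx ≠ some i := by
      rw [hvj]
      exact (Option.some_injective _).ne hij.symm
    refine hw ⟨v.toList, ?_⟩
    rw [← toList_of_mul_of_smul hij.symm hb ha hvi, smul_inv_smul]
  have : ⁅of a, of b⁆ • w = (of a * of b) • v := by
    rw [smul_smul, commutatorElement_def]
    group
  exact ⟨v.toList, by rw [this, toList_of_mul_of_smul hij ha hb hv]⟩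

end Monoid.CoprodI.Word

namespace Monoid.CoprodI

open Word

theorem injective_lift_commutatorElement_of {ι : Type u} {M : ι → Type u} [∀ i, Group (M i)]
    {i j : ι} (hij : i ≠ j) :
    Injective (FreeGroup.lift fun p : {a : M i // a ≠ 1} × {b : M j // b ≠ 1} =>
      ⁅(of p.1.1 : CoprodI M), of p.2.1⁆) := by
  classical
  refine FreeGroup.injective_lift_of_ping_pong_of_basepoint _ (fun p => startingWith p.1.1 p.2.1)
    (fun p => startingWith p.2.1 p.1.1) ?_ ?_ ?_ ?_ ?_ ?_ Word.empty ?_ ?_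
  · exact fun p => ⟨_, commutatorElement_of_smul_mem_startingWith hij p.1.2 p.2.2
      (empty_notMem_startingWith _ _)⟩
  · refine fun p q hpq => Set.disjoint_left.2 fun w hp hq => hpq ?_
    obtain ⟨h1, h2⟩ := eq_of_mem_startingWith hp hq
    exact Prod.ext (Subtype.ext h1) (Subtype.ext h2)
  · refine fun p q hpq => Set.disjoint_left.2 fun w hp hq => hpq ?_
    obtain ⟨h2, h1⟩ := eq_of_mem_startingWith hp hq
    exact Prod.ext (Subtype.ext h1) (Subtype.ext h2)
  · refine fun p q => Set.disjoint_left.2 fun w hp hq => hij ?_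
    simpa [fstIdx_of_mem_startingWith hp] using fstIdx_of_mem_startingWith hq
  · rintro p _ ⟨w, hw, rfl⟩
    exact commutatorElement_of_smul_mem_startingWith hij p.1.2 p.2.2 hw
  · rintro p _ ⟨w, hw, rfl⟩
    rw [Pi.inv_apply, commutatorElement_inv]
    exact commutatorElement_of_smul_mem_startingWith hij.symm p.2.2 p.1.2 hw
  · exact fun p => empty_notMem_startingWith _ _
  · exact fun p => empty_notMem_startingWith _ _

end Monoid.CoprodI

namespace Monoid.Coprod

variable {G H : Type} [Group G] [Group H]

-- `Coprod` has no normal form of its own; reduced words live in `CoprodI` over `Bool`.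
instance groupCond : ∀ b, Group (cond b G H)
  | true => ‹Group G›
  | false => ‹Group H›

def toCoprodI : G ∗ H →* CoprodI (fun b => cond b G H) :=
  lift (CoprodI.of (M := fun b => cond b G H) (i := true))
    (CoprodI.of (M := fun b => cond b G H) (i := false))

def cartesianBasis (p : {g : G // g ≠ 1} × {h : H // h ≠ 1}) : G ∗ H :=
  ⁅(inl p.1.1 : G ∗ H), inr p.2.1⁆

theorem injective_lift_cartesianBasis :
    Injective (FreeGroup.lift (cartesianBasis (G := G) (H := H))) := by
  have h : toCoprodI.comp (FreeGroup.lift (cartesianBasis (G := G) (H := H))) =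
      FreeGroup.lift fun p => ⁅CoprodI.of (M := fun b => cond b G H) (i := true) p.1.1,
        CoprodI.of (M := fun b => cond b G H) (i := false) p.2.1⁆ := by
    ext p
    simp [cartesianBasis, toCoprodI, commutatorElement_def]
  refine Injective.of_comp (f := toCoprodI) ?_
  rw [← MonoidHom.coe_comp, h]
  exact CoprodI.injective_lift_commutatorElement_of (M := fun b => cond b G H)
    Bool.true_eq_false.mp

def cartesianCommutators : Set (G ∗ H) :=
  Set.range fun p : G × H => ⁅(inl p.1 : G ∗ H), inr p.2⁆

theorem inl_mul_commutatorElement_mul_inv (g' g : G) (h : H) :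
    (inl g' : G ∗ H) * ⁅(inl g : G ∗ H), inr h⁆ * (inl g')⁻¹ =
      ⁅(inl (g' * g) : G ∗ H), inr h⁆ * ⁅(inl g' : G ∗ H), inr h⁆⁻¹ := by
  simp only [commutatorElement_def, map_mul]
  group

theorem inr_mul_commutatorElement_mul_inv (h' : H) (g : G) (h : H) :
    (inr h' : G ∗ H) * ⁅(inl g : G ∗ H), inr h⁆ * (inr h')⁻¹ =
      ⁅(inl g : G ∗ H), inr h'⁆⁻¹ * ⁅(inl g : G ∗ H), inr (h' * h)⁆ := by
  simp only [commutatorElement_def, map_mul]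
  group

theorem closure_cartesianCommutators_normal :
    (Subgroup.closure (cartesianCommutators : Set (G ∗ H))).Normal := by
  set N := Subgroup.closure (cartesianCommutators : Set (G ∗ H))
  have hmem (g : G) (h : H) : ⁅(inl g : G ∗ H), inr h⁆ ∈ N :=
    Subgroup.subset_closure ⟨(g, h), rfl⟩
  rw [← Subgroup.normalizer_eq_top_iff, eq_top_iff, ← range_inl_sup_range_inr, sup_le_iff,
    Subgroup.le_normalizer_closure_iff, Subgroup.le_normalizer_closure_iff]
  constructor
  · rintro _ ⟨g', rfl⟩ _ ⟨⟨g, h⟩, rfl⟩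
    rw [inl_mul_commutatorElement_mul_inv]
    exact mul_mem (hmem (g' * g) h) (inv_mem (hmem g' h))
  · rintro _ ⟨h', rfl⟩ _ ⟨⟨g, h⟩, rfl⟩
    rw [inr_mul_commutatorElement_mul_inv]
    exact mul_mem (inv_mem (hmem g h')) (hmem g (h' * h))

theorem ker_toProd_eq_closure_cartesianCommutators :
    (toProd : G ∗ H →* G × H).ker = Subgroup.closure cartesianCommutators := by
  set N := Subgroup.closure (cartesianCommutators : Set (G ∗ H))
  have : N.Normal := closure_cartesianCommutators_normal
  refine le_antisymm ?_ ((Subgroup.closure_le _).2 ?_)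
  · let π := QuotientGroup.mk' N
    have hcomm (g : G) (h : H) : Commute (π (inl g)) (π (inr h)) := by
      rw [← commutatorElement_eq_one_iff_commute, ← map_commutatorElement,
        QuotientGroup.mk'_apply, QuotientGroup.eq_one_iff]
      exact Subgroup.subset_closure ⟨(g, h), rfl⟩
    have hπ : ((π.comp inl).noncommCoprod (π.comp inr) hcomm).comp toProd = π := by
      ext <;> simp
    intro x hx
    have hπx : π x = 1 := by rw [← hπ, MonoidHom.comp_apply, MonoidHom.mem_ker.1 hx, map_one]
    exact (QuotientGroup.eq_one_iff x).1 hπx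
  · rintro _ ⟨⟨g, h⟩, rfl⟩
    simp [MonoidHom.mem_ker, commutatorElement_def]

theorem ker_toProd_eq_range_lift_cartesianBasis :
    (toProd : G ∗ H →* G × H).ker =
      (FreeGroup.lift (cartesianBasis (G := G) (H := H))).range := by
  rw [ker_toProd_eq_closure_cartesianCommutators, FreeGroup.range_lift_eq_closure]
  refine le_antisymm ((Subgroup.closure_le _).2 ?_) (Subgroup.closure_mono ?_)
  · rintro _ ⟨⟨g, h⟩, rfl⟩
    by_cases hg : g = 1
    · simp [hg]
    by_cases hh : h = 1
    · simp [hh]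
    exact Subgroup.subset_closure ⟨(⟨g, hg⟩, ⟨h, hh⟩), rfl⟩
  · rintro _ ⟨p, rfl⟩
    exact ⟨(p.1.1, p.2.1), rfl⟩

instance isFreeGroup_ker_toProd : IsFreeGroup (toProd : G ∗ H →* G × H).ker :=
  IsFreeGroup.ofMulEquiv ((MonoidHom.ofInjective injective_lift_cartesianBasis).trans
    (MulEquiv.subgroupCongr ker_toProd_eq_range_lift_cartesianBasis.symm))

end Monoid.Coprod

theorem IsFreeGroup.exists_surjective_int (F : Type*) [Group F] [IsFreeGroup F] [Nontrivial F] :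
    ∃ f : F →* Multiplicative ℤ, Surjective f := by
  obtain ⟨x⟩ : Nonempty (IsFreeGroup.Generators F) := by
    by_contra h
    rw [not_nonempty_iff] at h
    exact not_subsingleton F (IsFreeGroup.toFreeGroup F).toEquiv.subsingleton
  exact ⟨IsFreeGroup.lift fun _ => Multiplicative.ofAdd 1,
    fun n => ⟨IsFreeGroup.of x ^ n.toAdd, by simp [← ofAdd_zsmul]⟩⟩

theorem Subgroup.exists_surjective_int_of_le_isFreeGroup {G : Type*} [Group G] {K H : Subgroup G}
    [IsFreeGroup K] (hHK : H ≤ K) (hH : H ≠ ⊥) :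
    ∃ f : H →* Multiplicative ℤ, Surjective f := by
  let e := Subgroup.subgroupOfEquivOfLe hHK
  have : Nontrivial H := (Subgroup.nontrivial_iff_ne_bot H).2 hH
  have : Nontrivial (H.subgroupOf K) := e.toEquiv.nontrivial
  obtain ⟨f, hf⟩ := IsFreeGroup.exists_surjective_int (H.subgroupOf K)
  exact ⟨f.comp e.symm.toMonoidHom, hf.comp e.symm.surjective⟩

theorem Subgroup.FG.map {G C : Type*} [Group G] [Group C] {H : Subgroup G} (hH : H.FG)
    (φ : G →* C) : (H.map φ).FG := by
  have : Group.FG H := (Group.fg_iff_subgroup_fg H).2 hH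
  exact (Group.fg_iff_subgroup_fg _).1 (Group.fg_of_surjective (φ.subgroupMap_surjective H))

theorem LocallyIndicable.exists_surjective_of_map_ne_bot {G C : Type} [Group G] [Group C]
    (hC : LocallyIndicable C) {H : Subgroup G} (hH : H.FG) {φ : G →* C}
    (hφ : H.map φ ≠ ⊥) :
    ∃ f : H →* Multiplicative ℤ, Surjective f := by
  obtain ⟨f, hf⟩ := hC (H.map φ) hφ (hH.map φ)
  exact ⟨f.comp (φ.subgroupMap H), hf.comp (φ.subgroupMap_surjective H)⟩

/-- A free product of locally indicable groups is locally indicable. -/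
theorem locallyIndicable_coprod {A B : Type} [Group A] [Group B]
    (hA : LocallyIndicable A) (hB : LocallyIndicable B) :
    LocallyIndicable (Coprod A B) := by
  intro H hH hfg
  by_cases hHA : H.map (Coprod.fst : Coprod A B →* A) ≠ ⊥
  · exact hA.exists_surjective_of_map_ne_bot hfg hHA
  by_cases hHB : H.map (Coprod.snd : Coprod A B →* B) ≠ ⊥
  · exact hB.exists_surjective_of_map_ne_bot hfg hHB
  rw [not_not, Subgroup.map_eq_bot_iff] at hHA hHB
  have hHK : H ≤ (Coprod.toProd : Coprod A B →* A × B).ker := by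
    rw [← Coprod.fst_prod_snd, MonoidHom.ker_prod]
    exact le_inf hHA hHB
  exact Subgroup.exists_surjective_int_of_le_isFreeGroup hHK hH
end

section
/- Let G = ⟨X | R⟩ be an aspherical presentation in which no relator is conjugate to another relator or to the inverse of another relator. Suppose p₁⋯p_n = 1 in the free group F(X), where each p_i = u_i r_i^{e_i} u_i⁻¹ with u_i ∈ F(X), r_i ∈ R, e_i = ±1. Then the indices {1,…,n} fall into pairs (i,j) with r_i = r_j, e_i = −e_j, and u_i ∈ u_j N C_i, where N is the normal closure of R and C_i is the cyclic subgroup generated by the root s_i of r_i (r_i = s_i^{m_i} with s_i not a proper power). -/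
/-!
Follow every factor `u_i r_i^{e_i} u_i⁻¹` of the identity through a Peiffer reduction to the empty
sequence, remembering its index `i` and its current conjugator `w`. An exchange move conjugates a
factor by another factor, which lies in `N`, so the coset `w N = u_i N` never changes; a deletion
removes a factor together with its inverse, `w_j r_j^{e_j} w_j⁻¹ = (w_i r_i^{e_i} w_i⁻¹)⁻¹`. As no
relator is conjugate to another relator or to an inverse, `r_j = r_i` and `e_j = -e_i`, so
`w_i⁻¹ w_j` centralises `r_i`. In a free group the centraliser of `r ≠ 1` is cyclic (it is free by
Nielsen–Schreier and has nontrivial centre, which forces rank one), generated by the root of `r`.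
Hence `u_i ∈ u_j N C_i`, and the deletions pair off all indices.
-/

/-- The set of conjugates of relators and their inverses. -/
def ConjRelator {X : Type} (R : Set (FreeGroup X)) : Set (FreeGroup X) :=
  {p | ∃ (u r : FreeGroup X) (e : ℤ), r ∈ R ∧ (e = 1 ∨ e = -1) ∧ p = u * r ^ e * u⁻¹}

/-- Peiffer operations on sequences of conjugates of relators: deletion of an adjacent
inverse pair, and the two exchange moves. -/
inductive Peiffer {X : Type} : List (FreeGroup X) → List (FreeGroup X) → Prop
  | delete (L₁ L₂ : List (FreeGroup X)) (p : FreeGroup X) :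
      Peiffer (L₁ ++ [p, p⁻¹] ++ L₂) (L₁ ++ L₂)
  | exchL (L₁ L₂ : List (FreeGroup X)) (p q : FreeGroup X) :
      Peiffer (L₁ ++ [p, q] ++ L₂) (L₁ ++ [q, q⁻¹ * p * q] ++ L₂)
  | exchR (L₁ L₂ : List (FreeGroup X)) (p q : FreeGroup X) :
      Peiffer (L₁ ++ [p, q] ++ L₂) (L₁ ++ [p * q * p⁻¹, p] ++ L₂)

/-- A presentation is aspherical if every identity among the relators (a sequence of
conjugates of relators with trivial product) reduces to the empty sequence by Peiffer
operations. -/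
def IsAspherical {X : Type} (R : Set (FreeGroup X)) : Prop :=
  ∀ L : List (FreeGroup X), (∀ p ∈ L, p ∈ ConjRelator R) → L.prod = 1 →
    Relation.ReflTransGen Peiffer L []

open Subgroup

namespace IsFreeGroup

variable {G : Type*} [Group G] [IsFreeGroup G]

theorem isCyclic_of_subsingleton_generators [Subsingleton (Generators G)] : IsCyclic G := by
  have : IsCyclic (FreeGroup (Generators G)) := by
    cases isEmpty_or_nonempty (Generators G)
    · infer_instance
    · have := uniqueOfSubsingleton (Classical.arbitrary (Generators G))
      infer_instance
  exact isCyclic_of_surjective (mulEquiv G) (mulEquiv G).surjective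

theorem not_commute_of_ne {a b : Generators G} (hab : a ≠ b) : ¬Commute (of a) (of b) := by
  classical
  intro h
  let f : G →* Equiv.Perm (Fin 3) :=
    lift fun x => if x = a then Equiv.swap 0 1 else if x = b then Equiv.swap 1 2 else 1
  have := congrArg f h.eq
  simp only [map_mul, f, lift_of, if_neg hab.symm, ↓reduceIte] at this
  exact absurd this (by decide)

theorem isCyclic_of_forall_commute (h : ∀ x y : G, Commute x y) : IsCyclic G :=
  have : Subsingleton (Generators G) :=
    ⟨fun _ _ => by_contra fun hab => not_commute_of_ne hab (h _ _)⟩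
  isCyclic_of_subsingleton_generators

theorem exists_mem_zpowers_of_commute {x y : G} (h : Commute x y) :
    ∃ t : G, x ∈ zpowers t ∧ y ∈ zpowers t := by
  set H := closure ({x, y} : Set G)
  have hcomm : IsMulCommutative H := isMulCommutative_closure <| by
    simp only [Set.mem_insert_iff, Set.mem_singleton_iff]
    rintro a (rfl | rfl) b (rfl | rfl)
    exacts [rfl, h.eq, h.symm.eq, rfl]
  obtain ⟨t, ht⟩ := (isCyclic_of_forall_commute (G := H) fun a b =>
    hcomm.is_comm.comm a b).exists_generator
  have hmem {z : G} (hz : z ∈ H) : z ∈ zpowers (t : G) := by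
    simpa using mem_map_of_mem H.subtype (ht ⟨z, hz⟩)
  exact ⟨t, hmem (subset_closure (by simp)), hmem (subset_closure (by simp))⟩

noncomputable def expSum [DecidableEq (Generators G)] (a : Generators G) :
    G →* Multiplicative ℤ :=
  lift (Pi.mulSingle a (Multiplicative.ofAdd 1))

theorem mem_zpowers_of_commute_of {z : G} {a : Generators G} (h : Commute z (of a)) :
    z ∈ zpowers (of a) := by
  classical
  obtain ⟨t, ⟨i, rfl⟩, ⟨j, htj⟩⟩ := exists_mem_zpowers_of_commute h
  dsimp only at htj ⊢
  have hj : j * Multiplicative.toAdd (expSum a t) = 1 := by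
    have := congrArg (fun x => Multiplicative.toAdd (expSum a x)) htj
    simpa [expSum, lift_of, mul_comm] using this
  have hjj : j * j = 1 := by
    rcases Int.eq_one_or_neg_one_of_mul_eq_one hj with rfl | rfl <;> rfl
  exact ⟨j * i, by simp only [← htj, ← zpow_mul, ← mul_assoc, hjj, one_mul]⟩

theorem eq_one_of_commute_of_ne {z : G} {a b : Generators G} (hab : a ≠ b)
    (ha : Commute z (of a)) (hb : Commute z (of b)) : z = 1 := by
  classical
  obtain ⟨k, rfl⟩ := mem_zpowers_of_commute_of ha
  obtain ⟨l, hl⟩ := mem_zpowers_of_commute_of hb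
  have := congrArg (fun x => Multiplicative.toAdd (expSum a x)) hl
  simp [expSum, lift_of, hab.symm] at this
  simp [← this]

theorem isCyclic_of_ne_one_of_forall_commute {z : G} (hz : z ≠ 1) (h : ∀ x, Commute z x) :
    IsCyclic G :=
  have : Subsingleton (Generators G) :=
    ⟨fun _ _ => by_contra fun hab => hz (eq_one_of_commute_of_ne hab (h _) (h _))⟩
  isCyclic_of_subsingleton_generators

theorem isCyclic_centralizer {g : G} (hg : g ≠ 1) : IsCyclic (centralizer {g}) :=
  isCyclic_of_ne_one_of_forall_commute (z := ⟨g, mem_centralizer_singleton_iff.mpr rfl⟩)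
    (by simpa using hg) fun x => Subtype.ext (mem_centralizer_singleton_iff.mp x.2).symm

end IsFreeGroup

section TorsionFree

variable {G : Type*} [Group G] [IsMulTorsionFree G]

theorem ne_pow_of_forall_commute_mem_zpowers {s g : G} (hs : s ≠ 1) (hg : g ∈ zpowers s)
    (h : ∀ w, Commute w g → w ∈ zpowers s) {t : G} {k : ℕ} (hk : 2 ≤ k) : s ≠ t ^ k := by
  rintro rfl
  obtain ⟨d, rfl⟩ := mem_zpowers_iff.mp hg
  obtain ⟨c, htc⟩ := mem_zpowers_iff.mp (h t (((Commute.refl t).pow_right k).zpow_right d))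
  have hinj := injective_zpow_iff_not_isOfFinOrder.mpr (not_isOfFinOrder_of_isMulTorsionFree hs)
  have hkc : c * k = 1 := hinj <| by
    simp only [zpow_mul, htc, zpow_natCast, zpow_one]
  have := Int.eq_one_or_neg_one_of_mul_eq_one' hkc
  omega

end TorsionFree

namespace FreeGroup

variable {α : Type*}

theorem exists_root {g : FreeGroup α} (hg : g ≠ 1) :
    ∃ s : FreeGroup α, (∃ m : ℕ, 1 ≤ m ∧ g = s ^ m) ∧
      (∀ (t : FreeGroup α) (k : ℕ), 2 ≤ k → s ≠ t ^ k) ∧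
      ∀ w, Commute w g → w ∈ zpowers s := by
  obtain ⟨a, ha⟩ : ∃ a : FreeGroup α, ∀ w, Commute w g → w ∈ zpowers a := by
    obtain ⟨h, hh⟩ := (IsFreeGroup.isCyclic_centralizer hg).exists_generator
    refine ⟨h, fun w hw => ?_⟩
    simpa using mem_map_of_mem (centralizer {g}).subtype
      (hh ⟨w, mem_centralizer_singleton_iff.mpr hw.eq⟩)
  obtain ⟨k, rfl⟩ := mem_zpowers_iff.mp (ha g (Commute.refl g))
  suffices ∃ (s : FreeGroup α) (m : ℕ), 1 ≤ m ∧ a ^ k = s ^ m ∧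
      ∀ w, Commute w (a ^ k) → w ∈ zpowers s by
    obtain ⟨s, m, hm, hs, hcent⟩ := this
    have hs1 : s ≠ 1 := by rintro rfl; simp_all
    exact ⟨s, ⟨m, hm, hs⟩, fun t k hk =>
      ne_pow_of_forall_commute_mem_zpowers hs1 (hs ▸ pow_mem (mem_zpowers s) m) hcent hk, hcent⟩
  obtain ⟨n, rfl | rfl⟩ := Int.eq_nat_or_neg k
  all_goals have hn : n ≠ 0 := by rintro rfl; simp at hg
  · exact ⟨a, n, by omega, zpow_natCast a n, ha⟩
  · refine ⟨a⁻¹, n, by omega, by rw [zpow_neg, zpow_natCast, inv_pow], ?_⟩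
    simpa [zpowers_inv] using ha

end FreeGroup

theorem List.exists_of_map_eq_append_pair {α β : Type*} {f : α → β} {l : List α}
    {l₁ l₂ : List β} {b₁ b₂ : β} (h : l.map f = l₁ ++ [b₁, b₂] ++ l₂) :
    ∃ m₁ a₁ a₂ m₂, l = m₁ ++ [a₁, a₂] ++ m₂ ∧ m₁.map f = l₁ ∧ f a₁ = b₁ ∧ f a₂ = b₂ ∧
      m₂.map f = l₂ := by
  obtain ⟨m, m₂, rfl, hm, rfl⟩ := List.map_eq_append_iff.mp h
  obtain ⟨m₁, m', rfl, rfl, hm'⟩ := List.map_eq_append_iff.mp hm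
  obtain ⟨a₁, m'', rfl, rfl, hm''⟩ := List.map_eq_cons_iff.mp hm'
  obtain ⟨a₂, m''', rfl, rfl, hm'''⟩ := List.map_eq_cons_iff.mp hm''
  obtain rfl := List.map_eq_nil_iff.mp hm'''
  exact ⟨m₁, a₁, a₂, m₂, rfl, rfl, rfl, rfl, rfl⟩

section Pairing

variable {α : Type*} [DecidableEq α]

theorem exists_perm_swap_pairs (P : List (α × α))
    (hP : (P.flatMap fun p => [p.1, p.2]).Nodup) :
    ∃ σ : Equiv.Perm α, (∀ p ∈ P, σ p.1 = p.2 ∧ σ p.2 = p.1) ∧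
      ∀ a ∉ P.flatMap (fun p => [p.1, p.2]), σ a = a := by
  induction P with
  | nil => exact ⟨1, by simp, by simp⟩
  | cons p P ih =>
    simp only [List.flatMap_cons, List.cons_append, List.nil_append, List.nodup_cons,
      List.mem_cons, not_or] at hP
    obtain ⟨⟨-, h₁⟩, h₂, hnd⟩ := hP
    obtain ⟨σ, hσ, hfix⟩ := ih hnd
    have hmem {q} (hq : q ∈ P) : q.1 ∈ P.flatMap (fun p => [p.1, p.2]) ∧
        q.2 ∈ P.flatMap (fun p => [p.1, p.2]) :=
      ⟨List.mem_flatMap.mpr ⟨q, hq, by simp⟩, List.mem_flatMap.mpr ⟨q, hq, by simp⟩⟩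
    refine ⟨Equiv.swap p.1 p.2 * σ, ?_, fun a ha => ?_⟩
    · rintro q (_ | ⟨_, hq⟩)
      · simp [hfix _ h₁, hfix _ h₂]
      · obtain ⟨hq₁, hq₂⟩ := hmem hq
        simp [hσ q hq, Equiv.swap_apply_of_ne_of_ne, ne_of_mem_of_not_mem hq₁ h₁,
          ne_of_mem_of_not_mem hq₁ h₂, ne_of_mem_of_not_mem hq₂ h₁, ne_of_mem_of_not_mem hq₂ h₂]
    · simp only [List.flatMap_cons, List.cons_append, List.nil_append, List.mem_cons,
        not_or] at ha
      simp [hfix a ha.2.2, Equiv.swap_apply_of_ne_of_ne ha.1 ha.2.1]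

theorem exists_involution_of_pairs {r : α → α → Prop} (hr : ∀ a b, r a b → r b a)
    (P : List (α × α)) (hnd : (P.flatMap fun p => [p.1, p.2]).Nodup)
    (hcover : ∀ a, a ∈ P.flatMap fun p => [p.1, p.2]) (hP : ∀ p ∈ P, r p.1 p.2) :
    ∃ σ : Equiv.Perm α, (∀ a, σ a ≠ a) ∧ σ⁻¹ = σ ∧ ∀ a, r a (σ a) := by
  obtain ⟨σ, hσ, -⟩ := exists_perm_swap_pairs P hnd
  have hpair (a : α) : ∃ p ∈ P, p.1 ≠ p.2 ∧
      (a = p.1 ∧ σ a = p.2 ∨ a = p.2 ∧ σ a = p.1) := by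
    obtain ⟨p, hp, ha⟩ := List.mem_flatMap.mp (hcover a)
    have hne : p.1 ≠ p.2 := by simpa using (List.nodup_flatMap.mp hnd).1 p hp
    simp only [List.mem_cons, List.not_mem_nil, or_false] at ha
    rcases ha with rfl | rfl
    exacts [⟨p, hp, hne, .inl ⟨rfl, (hσ p hp).1⟩⟩, ⟨p, hp, hne, .inr ⟨rfl, (hσ p hp).2⟩⟩]
  refine ⟨σ, fun a => ?_, Equiv.ext fun a => ?_, fun a => ?_⟩ <;>
    obtain ⟨p, hp, hne, ⟨rfl, ha⟩ | ⟨rfl, ha⟩⟩ := hpair a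
  · exact ha ▸ hne.symm
  · exact ha ▸ hne
  · rw [Equiv.Perm.inv_eq_iff_eq, ha, (hσ p hp).2]
  · rw [Equiv.Perm.inv_eq_iff_eq, ha, (hσ p hp).1]
  · exact ha ▸ hP p hp
  · exact ha ▸ hr _ _ (hP p hp)

end Pairing

section Labelled

variable {X : Type} {ι : Type*} {N : Subgroup (FreeGroup X)}

structure LabelledConj (κ : ι → FreeGroup X ⧸ N) where
  label : ι
  conj : FreeGroup X
  mk_conj : (conj : FreeGroup X ⧸ N) = κ label

namespace LabelledConj

variable {κ : ι → FreeGroup X ⧸ N} (g : ι → FreeGroup X)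

def eval (t : LabelledConj κ) : FreeGroup X := t.conj * g t.label * t.conj⁻¹

theorem eval_mem [N.Normal] (hg : ∀ i, g i ∈ N) (t : LabelledConj κ) : t.eval g ∈ N :=
  ‹N.Normal›.conj_mem _ (hg t.label) t.conj

def conjBy [N.Normal] (t : LabelledConj κ) {n : FreeGroup X} (hn : n ∈ N) : LabelledConj κ where
  label := t.label
  conj := n * t.conj
  mk_conj := by rw [QuotientGroup.mk_mul, (QuotientGroup.eq_one_iff n).mpr hn, one_mul, t.mk_conj]

theorem eval_conjBy [N.Normal] (t : LabelledConj κ) {n : FreeGroup X} (hn : n ∈ N) :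
    (t.conjBy hn).eval g = n * t.eval g * n⁻¹ := by
  simp only [eval, conjBy]
  group

end LabelledConj

def IsInversePair (g : ι → FreeGroup X) (κ : ι → FreeGroup X ⧸ N) (i j : ι) : Prop :=
  ∃ s t : LabelledConj κ, s.label = i ∧ t.label = j ∧ t.eval g = (s.eval g)⁻¹

variable {g : ι → FreeGroup X} {κ : ι → FreeGroup X ⧸ N}

theorem IsInversePair.symm {i j : ι} : IsInversePair g κ i j → IsInversePair g κ j i
  | ⟨s, t, hs, ht, hst⟩ => ⟨t, s, ht, hs, by rw [hst, inv_inv]⟩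

theorem Peiffer.labelled_perm_or_isInversePair [N.Normal] (hg : ∀ i, g i ∈ N)
    {L L' : List (FreeGroup X)} (h : Peiffer L L') {Λ : List (LabelledConj κ)}
    (hΛ : Λ.map (·.eval g) = L) :
    (∃ Λ' : List (LabelledConj κ), Λ'.map (·.eval g) = L' ∧
      (Λ'.map (·.label)).Perm (Λ.map (·.label))) ∨
    ∃ (Λ' : List (LabelledConj κ)) (i j : ι), Λ'.map (·.eval g) = L' ∧
      (Λ.map (·.label)).Perm (i :: j :: Λ'.map (·.label)) ∧ IsInversePair g κ i j := by
  cases h with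
  | delete L₁ L₂ p =>
    obtain ⟨Λ₁, s, t, Λ₂, rfl, rfl, hs, ht, rfl⟩ := List.exists_of_map_eq_append_pair hΛ
    refine .inr ⟨Λ₁ ++ Λ₂, s.label, t.label, by simp, ?_, s, t, rfl, rfl, by rw [ht, hs]⟩
    simp only [List.map_append, List.map_cons, List.append_assoc, List.cons_append,
      List.nil_append]
    exact List.perm_middle.trans (List.perm_middle.cons _)
  | exchL L₁ L₂ p q =>
    obtain ⟨Λ₁, s, t, Λ₂, rfl, rfl, rfl, rfl, rfl⟩ := List.exists_of_map_eq_append_pair hΛ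
    refine .inl ⟨Λ₁ ++ [t, s.conjBy (N.inv_mem (t.eval_mem g hg))] ++ Λ₂, ?_, ?_⟩
    · simp [LabelledConj.eval_conjBy]
    · simpa [LabelledConj.conjBy] using (List.Perm.swap s.label t.label _).append_left _
  | exchR L₁ L₂ p q =>
    obtain ⟨Λ₁, s, t, Λ₂, rfl, rfl, rfl, rfl, rfl⟩ := List.exists_of_map_eq_append_pair hΛ
    refine .inl ⟨Λ₁ ++ [t.conjBy (s.eval_mem g hg), s] ++ Λ₂, ?_, ?_⟩
    · simp [LabelledConj.eval_conjBy]
    · simpa [LabelledConj.conjBy] using (List.Perm.swap s.label t.label _).append_left _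

theorem exists_pairs_of_reflTransGen_peiffer_nil [N.Normal] (hg : ∀ i, g i ∈ N)
    {L : List (FreeGroup X)} (h : Relation.ReflTransGen Peiffer L [])
    {Λ : List (LabelledConj κ)} (hΛ : Λ.map (·.eval g) = L) :
    ∃ P : List (ι × ι), (Λ.map (·.label)).Perm (P.flatMap fun p => [p.1, p.2]) ∧
      ∀ p ∈ P, IsInversePair g κ p.1 p.2 := by
  induction h using Relation.ReflTransGen.head_induction_on generalizing Λ with
  | refl =>
    obtain rfl := List.map_eq_nil_iff.mp hΛ
    exact ⟨[], by simp, by simp⟩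
  | head hstep _ ih =>
    rcases hstep.labelled_perm_or_isInversePair hg hΛ with
      ⟨Λ', hΛ', hperm⟩ | ⟨Λ', i, j, hΛ', hperm, hij⟩
    · obtain ⟨P, hP, hPpairs⟩ := ih hΛ'
      exact ⟨P, hperm.symm.trans hP, hPpairs⟩
    · obtain ⟨P, hP, hPpairs⟩ := ih hΛ'
      refine ⟨(i, j) :: P, hperm.trans ((hP.cons j).cons i), ?_⟩
      simpa [hij] using hPpairs

end Labelled

theorem eq_and_eq_of_isConj_zpow {G : Type*} [Group G] {R : Set G}
    (hconj : ∀ r ∈ R, ∀ s ∈ R, (r ≠ s → ¬ IsConj r s) ∧ ¬ IsConj r s⁻¹) {r s : G}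
    (hr : r ∈ R) (hs : s ∈ R) {a b : ℤ} (ha : a = 1 ∨ a = -1) (hb : b = 1 ∨ b = -1)
    (h : IsConj (r ^ a) (s ^ b)) : r = s ∧ a = b := by
  rcases ha with rfl | rfl <;> rcases hb with rfl | rfl <;>
    simp only [zpow_one, zpow_neg, Int.reduceNeg, and_true] at h ⊢
  · exact by_contra fun hne => (hconj r hr s hs).1 hne h
  · exact ((hconj r hr s hs).2 h).elim
  · exact ((hconj s hs r hr).2 h.symm).elim
  · refine by_contra fun hne => (hconj r hr s hs).1 hne ?_
    obtain ⟨c, hc⟩ := isConj_iff.mp h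
    exact isConj_iff.mpr ⟨c, by rw [← inv_inv s, ← hc]; group⟩

theorem IsInversePair.relators_paired {X : Type} {ι : Type*} {R : Set (FreeGroup X)}
    (hconj : ∀ r ∈ R, ∀ s ∈ R, (r ≠ s → ¬ IsConj r s) ∧ ¬ IsConj r s⁻¹)
    {u rr : ι → FreeGroup X} {e : ι → ℤ} {i j : ι} (hri : rr i ∈ R) (hrj : rr j ∈ R)
    (hei : e i = 1 ∨ e i = -1) (hej : e j = 1 ∨ e j = -1)
    (h : IsInversePair (fun i => rr i ^ e i) (fun i => (u i : FreeGroup X ⧸ normalClosure R))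
      i j) :
    rr j = rr i ∧ e j = -e i ∧ ∃ s : FreeGroup X, (∃ m : ℕ, 1 ≤ m ∧ rr i = s ^ m) ∧
      (∀ (t : FreeGroup X) (k : ℕ), 2 ≤ k → s ≠ t ^ k) ∧
      ∃ ν ∈ normalClosure R, ∃ c : ℤ, u i = u j * ν * s ^ c := by
  obtain ⟨a, b, rfl, rfl, hab⟩ := h
  set c := a.conj⁻¹ * b.conj
  have hc : c * rr b.label ^ e b.label * c⁻¹ = rr a.label ^ (-e a.label) := by
    simp only [LabelledConj.eval] at hab
    calc c * rr b.label ^ e b.label * c⁻¹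
        = a.conj⁻¹ * (b.conj * rr b.label ^ e b.label * b.conj⁻¹) * a.conj := by
          simp only [c]; group
      _ = rr a.label ^ (-e a.label) := by rw [hab]; group
  obtain ⟨hrr, hee⟩ := eq_and_eq_of_isConj_zpow hconj hrj hri hej
    (by omega) (isConj_iff.mpr ⟨c, hc⟩)
  rw [hrr, hee] at hc
  have hcomm : Commute c (rr a.label) := by
    have hsq : -e a.label * -e a.label = 1 := by rcases hei with h | h <;> simp [h]
    have := (show Commute c _ from mul_inv_eq_iff_eq_mul.mp hc).zpow_right (-e a.label)
    rwa [← zpow_mul, hsq, zpow_one] at this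
  have hri1 : rr a.label ≠ 1 := fun h1 => (hconj _ hri _ hri).2 (by simp [h1])
  obtain ⟨s, hroot, hnp, hcent⟩ := FreeGroup.exists_root hri1
  obtain ⟨k, hk⟩ := mem_zpowers_iff.mp (hcent c hcomm)
  refine ⟨hrr, hee, s, hroot, hnp, (u b.label)⁻¹ * u a.label * s ^ k, ?_, -k, by group⟩
  rw [hk, ← QuotientGroup.eq_one_iff]
  simp [← a.mk_conj, ← b.mk_conj, c]

/-- **Lyndon–Schupp III.10.2.** In an aspherical presentation with no relator conjugate
to another relator or to the inverse of a relator, any trivial product of conjugates of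
relators pairs off. -/
theorem aspherical_pairing {X : Type} (R : Set (FreeGroup X))
    (hasp : IsAspherical R)
    (hconj : ∀ r ∈ R, ∀ s ∈ R, (r ≠ s → ¬ IsConj r s) ∧ ¬ IsConj r s⁻¹)
    (n : ℕ) (u rr : Fin n → FreeGroup X) (e : Fin n → ℤ)
    (hr : ∀ i, rr i ∈ R) (he : ∀ i, e i = 1 ∨ e i = -1)
    (hprod : (List.ofFn fun i => u i * rr i ^ e i * (u i)⁻¹).prod = 1) :
    ∃ σ : Equiv.Perm (Fin n), (∀ i, σ i ≠ i) ∧ σ⁻¹ = σ ∧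
      ∀ i, rr (σ i) = rr i ∧ e (σ i) = - e i ∧
        ∃ s : FreeGroup X, (∃ m : ℕ, 1 ≤ m ∧ rr i = s ^ m) ∧
          (∀ (t : FreeGroup X) (k : ℕ), 2 ≤ k → s ≠ t ^ k) ∧
          ∃ ν ∈ Subgroup.normalClosure R, ∃ c : ℤ, u i = u (σ i) * ν * s ^ c := by
  let Λ : List (LabelledConj fun i => (u i : FreeGroup X ⧸ Subgroup.normalClosure R)) :=
    List.ofFn fun i => ⟨i, u i, rfl⟩
  have hΛ : Λ.map (·.eval fun i => rr i ^ e i) =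
      List.ofFn fun i => u i * rr i ^ e i * (u i)⁻¹ := by
    simp [Λ, List.map_ofFn, Function.comp_def, LabelledConj.eval]
  have hlabels : Λ.map (·.label) = List.finRange n := by
    simp only [Λ, List.map_ofFn, Function.comp_def]
    exact List.ofFn_id n
  have hconjRel : ∀ p ∈ List.ofFn fun i => u i * rr i ^ e i * (u i)⁻¹, p ∈ ConjRelator R := by
    simp only [List.mem_ofFn, forall_exists_index, forall_apply_eq_imp_iff]
    exact fun i => ⟨u i, rr i, e i, hr i, he i, rfl⟩
  obtain ⟨P, hP, hPpairs⟩ := exists_pairs_of_reflTransGen_peiffer_nil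
    (fun i => Subgroup.zpow_mem _ (Subgroup.subset_normalClosure (hr i)) _)
    (hasp _ hconjRel hprod) hΛ
  rw [hlabels] at hP
  obtain ⟨σ, hσ, hσσ, hσpairs⟩ := exists_involution_of_pairs (fun _ _ h => h.symm) P
    (hP.nodup_iff.mp (List.nodup_finRange n)) (fun i => hP.subset (List.mem_finRange i)) hPpairs
  exact ⟨σ, hσ, hσσ, fun i =>
    (hσpairs i).relators_paired hconj (hr i) (hr (σ i)) (he i) (he (σ i))⟩
end
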